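/- arXiv:1709.04281 — 4 statements merged into one kernel-verified Lean document; each statement's English description precedes it below -/
import Mathlib

section
/- Let n ≥ 1, let λ_1, …, λ_n be pairwise distinct complex numbers and α_1, …, α_n be nonzero complex numbers, and set φ_j = Σ_{i=1}^n α_i λ_i^j. Then for every integer ν ≥ n, the ν×ν Hankel matrix ⁰₁H_ν with (k,l) entry φ_{k+l} has rank exactly n. -/
/-!
Writing `V` for the `n × ν` Vandermonde matrix `(λ_i ^ l)` of the nodes, the Hankel matrix
factors as `H_ν = Vᵀ · diag α · V`, so its rank is at most `n`. Its leading `n × n` block is the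
same factorization with the square Vandermonde matrix, whose determinant `(∏ α_i) · det(V)²` is
nonzero for distinct nodes and nonzero weights; a submatrix of rank `n` forces rank at least `n`.
-/

namespace Matrix

variable {R : Type*} [CommRing R] {n : ℕ}

def expSumHankel (α lam : Fin n → R) (ν : ℕ) : Matrix (Fin ν) (Fin ν) R :=
  of fun k l ↦ ∑ i, α i * lam i ^ (k + l : ℕ)

theorem expSumHankel_eq_rectVandermonde (α lam : Fin n → R) (ν : ℕ) :
    expSumHankel α lam ν =
      (rectVandermonde lam 1 ν)ᵀ * diagonal α * rectVandermonde lam 1 ν := by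
  ext k l
  rw [mul_apply]
  simp only [expSumHankel, of_apply, mul_diagonal, transpose_apply, rectVandermonde_apply,
    Pi.one_apply, one_pow, mul_one, pow_add]
  exact Finset.sum_congr rfl fun i _ ↦ by ring

theorem expSumHankel_submatrix_castLE (α lam : Fin n → R) {μ ν : ℕ} (h : μ ≤ ν) :
    (expSumHankel α lam ν).submatrix (Fin.castLE h) (Fin.castLE h) = expSumHankel α lam μ :=
  rfl

theorem rank_expSumHankel_le [StrongRankCondition R] (α lam : Fin n → R) (ν : ℕ) :
    (expSumHankel α lam ν).rank ≤ n := by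
  rw [expSumHankel_eq_rectVandermonde]
  exact (rank_mul_le_right _ _).trans (rank_le_height _)

theorem det_expSumHankel_self (α lam : Fin n → R) :
    (expSumHankel α lam n).det = (∏ i, α i) * (vandermonde lam).det ^ 2 := by
  rw [expSumHankel_eq_rectVandermonde, ← projVandermonde, ← vandermonde_eq_projVandermonde,
    det_mul, det_mul, det_transpose, det_diagonal]
  ring

theorem rank_expSumHankel [IsDomain R] {α lam : Fin n → R} (hα : ∀ i, α i ≠ 0)
    (hlam : Function.Injective lam) {ν : ℕ} (hν : n ≤ ν) :
    (expSumHankel α lam ν).rank = n := by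
  refine le_antisymm (rank_expSumHankel_le α lam ν) ?_
  have hdet : (expSumHankel α lam n).det ≠ 0 := by
    rw [det_expSumHankel_self]
    exact mul_ne_zero (Finset.prod_ne_zero_iff.mpr fun i _ ↦ hα i)
      (pow_ne_zero 2 (det_vandermonde_ne_zero_iff.mpr hlam))
  calc n = (expSumHankel α lam n).rank := by
        rw [rank_of_det_ne_zero hdet, Fintype.card_fin]
    _ ≤ (expSumHankel α lam ν).rank := by
        rw [← expSumHankel_submatrix_castLE α lam hν]
        exact rank_submatrix_le _ _ _

end Matrix

theorem hankel_rank_eq_model_order_general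
    (n : ℕ) (lam α : Fin n → ℂ)
    (hlam : Function.Injective lam) (hα : ∀ i, α i ≠ 0)
    (φ : ℕ → ℂ) (hφ : ∀ j : ℕ, φ j = ∑ i, α i * lam i ^ j)
    (ν : ℕ) (hν : n ≤ ν)
    (H : Matrix (Fin ν) (Fin ν) ℂ)
    (hH : ∀ k l : Fin ν, H k l = φ ((k : ℕ) + (l : ℕ))) :
    H.rank = n := by
  have hH_eq : H = Matrix.expSumHankel α lam ν := Matrix.ext fun k l ↦ by
    rw [hH, hφ]
    rfl
  rw [hH_eq]
  exact Matrix.rank_expSumHankel hα hlam hν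

/-- If the `λ i` are pairwise distinct and the `α i` are nonzero, then for
every `ν ≥ n` the `ν × ν` Hankel matrix `⁰₁H_ν` built from the samples
`φ j = ∑ i, α i * λ i ^ j` has rank exactly `n`. -/
theorem hankel_rank_eq_model_order
    (n : ℕ) (hn : 1 ≤ n) (lam α : Fin n → ℂ)
    (hlam : Function.Injective lam) (hα : ∀ i, α i ≠ 0)
    (φ : ℕ → ℂ) (hφ : ∀ j : ℕ, φ j = ∑ i, α i * lam i ^ j)
    (ν : ℕ) (hν : n ≤ ν)
    (H : Matrix (Fin ν) (Fin ν) ℂ)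
    (hH : ∀ k l : Fin ν, H k l = φ ((k : ℕ) + (l : ℕ))) :
    H.rank = n :=
  hankel_rank_eq_model_order_general n lam α hlam hα φ hφ ν hν H hH
end

section
/- Let n ≥ 1, let λ_1, …, λ_n be pairwise distinct complex numbers and α_1, …, α_n be nonzero complex numbers, and set φ_j = Σ_{i=1}^n α_i λ_i^j. Let ⁰₁H_n and ¹₁H_n be the n×n Hankel matrices with (k,l) entries φ_{k+l} and φ_{1+k+l} respectively. Then for a complex number λ, det(¹₁H_n − λ · ⁰₁H_n) = 0 if and only if λ ∈ {λ_1, …, λ_n}; that is, the generalized eigenvalues of the pencil (¹₁H_n, ⁰₁H_n) are exactly λ_1, …, λ_n. -/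
/-- If the `λ i` are pairwise distinct and the `α i` are nonzero, then the
generalized eigenvalues of the Hankel pencil `(¹₁H_n, ⁰₁H_n)` built from the samples
`φ j = ∑ i, α i * λ i ^ j` are exactly `λ 1, …, λ n`:
`det (¹₁H_n − z • ⁰₁H_n) = 0 ↔ z ∈ {λ 1, …, λ n}`. -/
theorem hankel_pencil_generalized_eigenvalues
    (n : ℕ) (hn : 1 ≤ n) (lam α : Fin n → ℂ)
    (hlam : Function.Injective lam) (hα : ∀ i, α i ≠ 0)
    (φ : ℕ → ℂ) (hφ : ∀ j : ℕ, φ j = ∑ i, α i * lam i ^ j)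
    (H0 H1 : Matrix (Fin n) (Fin n) ℂ)
    (hH0 : ∀ k l : Fin n, H0 k l = φ ((k : ℕ) + (l : ℕ)))
    (hH1 : ∀ k l : Fin n, H1 k l = φ (1 + (k : ℕ) + (l : ℕ)))
    (z : ℂ) :
    (H1 - z • H0).det = 0 ↔ ∃ i, z = lam i := by
  have key : H1 - z • H0 =
      (Matrix.vandermonde lam).transpose * Matrix.diagonal (fun i => α i * (lam i - z)) *
        Matrix.vandermonde lam := by
    ext k l
    simp only [Matrix.sub_apply, Matrix.smul_apply, hH0, hH1, hφ, smul_eq_mul,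
      Matrix.mul_apply, Matrix.diagonal_apply, Matrix.transpose_apply, Matrix.vandermonde_apply,
      Finset.mul_sum, Finset.sum_mul, ← Finset.sum_sub_distrib]
    refine Finset.sum_congr rfl fun i _ => ?_
    rw [Finset.sum_eq_single i (by intro b _ hb; simp [hb]) (by simp)]
    rw [if_pos rfl]; simp only [pow_add, pow_one]
    ring
  have hv : (Matrix.vandermonde lam).det ≠ 0 := by
    rw [Matrix.det_vandermonde]
    refine Finset.prod_ne_zero_iff.2 fun i _ => Finset.prod_ne_zero_iff.2 fun j hj => ?_
    exact sub_ne_zero.2 fun h => (Finset.mem_Ioi.1 hj).ne' (hlam h)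
  rw [key, Matrix.det_mul, Matrix.det_mul, Matrix.det_transpose, Matrix.det_diagonal]
  constructor
  · intro h
    rcases mul_eq_zero.1 h with h | h
    · rcases mul_eq_zero.1 h with h | h
      · exact absurd h hv
      · rcases Finset.prod_eq_zero_iff.1 h with ⟨i, _, hi⟩
        rcases mul_eq_zero.1 hi with h' | h'
        · exact absurd h' (hα i)
        · exact ⟨i, (sub_eq_zero.1 h').symm⟩
    · exact absurd h hv
  · rintro ⟨i, rfl⟩
    have : ∏ i', α i' * (lam i' - lam i) = 0 :=
      Finset.prod_eq_zero (Finset.mem_univ i) (by simp)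
    simp [this]
end

section
/- Let n ≥ 1, let u ≥ 1 be an integer, let λ_1, …, λ_n be complex numbers such that λ_1^u, …, λ_n^u are pairwise distinct, let α_1, …, α_n be nonzero complex numbers, and set φ_j = Σ_{i=1}^n α_i λ_i^j. Let ⁰ᵤH_n and ᵘᵤH_n be the n×n Hankel matrices with (k,l) entries φ_{(k+l)u} and φ_{u+(k+l)u} respectively. Then for a complex number λ, det(ᵘᵤH_n − λ · ⁰ᵤH_n) = 0 if and only if λ ∈ {λ_1^u, …, λ_n^u}; that is, the generalized eigenvalues of the pencil (ᵘᵤH_n, ⁰ᵤH_n) are exactly λ_1^u, …, λ_n^u. -/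
/-! With `μ i = λ i ^ u`, the pencil factors as `ᵘᵤH_n - z • ⁰ᵤH_n = Vᵀ * diag (α i * (μ i - z)) * V`
for the Vandermonde matrix `V` of the `μ i`. Its determinant is therefore
`det V ^ 2 * ∏ i, α i * (μ i - z)`, and `det V ≠ 0` because the `μ i` are distinct. -/

namespace Matrix

variable {R : Type*} [CommRing R]

theorem vandermonde_transpose_mul_diagonal_mul_vandermonde_apply {n : ℕ} (v d : Fin n → R)
    (k l : Fin n) :
    ((vandermonde v)ᵀ * diagonal d * vandermonde v) k l = ∑ i, d i * v i ^ ((k : ℕ) + l) := by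
  rw [Matrix.mul_assoc, mul_apply]
  refine Finset.sum_congr rfl fun i _ => ?_
  rw [transpose_apply, diagonal_mul, vandermonde_apply, vandermonde_apply, pow_add]
  ring

theorem det_transpose_mul_diagonal_mul {m : Type*} [Fintype m] [DecidableEq m]
    (A : Matrix m m R) (d : m → R) :
    (Aᵀ * diagonal d * A).det = A.det ^ 2 * ∏ i, d i := by
  rw [det_mul, det_mul, det_transpose, det_diagonal]
  ring

end Matrix

open Matrix

theorem decimated_hankel_pencil_eq {R : Type*} [CommRing R] {n : ℕ} (u : ℕ) (lam α : Fin n → R)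
    (φ : ℕ → R) (hφ : ∀ j : ℕ, φ j = ∑ i, α i * lam i ^ j)
    (H0 Hu : Matrix (Fin n) (Fin n) R)
    (hH0 : ∀ k l : Fin n, H0 k l = φ (((k : ℕ) + (l : ℕ)) * u))
    (hHu : ∀ k l : Fin n, Hu k l = φ (u + ((k : ℕ) + (l : ℕ)) * u)) (z : R) :
    Hu - z • H0 = (vandermonde fun i => lam i ^ u)ᵀ *
      diagonal (fun i => α i * (lam i ^ u - z)) * vandermonde fun i => lam i ^ u := by
  ext k l
  rw [vandermonde_transpose_mul_diagonal_mul_vandermonde_apply, Matrix.sub_apply, Matrix.smul_apply, hH0, hHu,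
    hφ, hφ, smul_eq_mul, Finset.mul_sum, ← Finset.sum_sub_distrib]
  refine Finset.sum_congr rfl fun i _ => ?_
  rw [pow_add, pow_mul']
  ring

theorem decimated_hankel_pencil_generalized_eigenvalues_general
    (n : ℕ) (u : ℕ) (lam α : Fin n → ℂ)
    (hlamu : Function.Injective fun i => lam i ^ u) (hα : ∀ i, α i ≠ 0)
    (φ : ℕ → ℂ) (hφ : ∀ j : ℕ, φ j = ∑ i, α i * lam i ^ j)
    (H0 Hu : Matrix (Fin n) (Fin n) ℂ)
    (hH0 : ∀ k l : Fin n, H0 k l = φ (((k : ℕ) + (l : ℕ)) * u))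
    (hHu : ∀ k l : Fin n, Hu k l = φ (u + ((k : ℕ) + (l : ℕ)) * u))
    (z : ℂ) :
    (Hu - z • H0).det = 0 ↔ ∃ i, z = lam i ^ u := by
  have hV : (vandermonde fun i => lam i ^ u).det ≠ 0 := det_vandermonde_ne_zero_iff.2 hlamu
  rw [decimated_hankel_pencil_eq u lam α φ hφ H0 Hu hH0 hHu z, det_transpose_mul_diagonal_mul,
    mul_eq_zero, pow_eq_zero_iff two_ne_zero, or_iff_right hV, Finset.prod_eq_zero_iff]
  simp only [Finset.mem_univ, true_and, mul_eq_zero, hα, false_or, sub_eq_zero, eq_comm]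

/-- If `λ 1 ^ u, …, λ n ^ u` are pairwise distinct and the `α i` are
nonzero, then the generalized eigenvalues of the decimated Hankel pencil
`(ᵘᵤH_n, ⁰ᵤH_n)` built from the samples `φ j = ∑ i, α i * λ i ^ j` are exactly
`λ 1 ^ u, …, λ n ^ u`. -/
theorem decimated_hankel_pencil_generalized_eigenvalues
    (n : ℕ) (hn : 1 ≤ n) (u : ℕ) (hu : 1 ≤ u) (lam α : Fin n → ℂ)
    (hlamu : Function.Injective fun i => lam i ^ u) (hα : ∀ i, α i ≠ 0)
    (φ : ℕ → ℂ) (hφ : ∀ j : ℕ, φ j = ∑ i, α i * lam i ^ j)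
    (H0 Hu : Matrix (Fin n) (Fin n) ℂ)
    (hH0 : ∀ k l : Fin n, H0 k l = φ (((k : ℕ) + (l : ℕ)) * u))
    (hHu : ∀ k l : Fin n, Hu k l = φ (u + ((k : ℕ) + (l : ℕ)) * u))
    (z : ℂ) :
    (Hu - z • H0).det = 0 ↔ ∃ i, z = lam i ^ u :=
  decimated_hankel_pencil_generalized_eigenvalues_general n u lam α hlamu hα φ hφ H0 Hu hH0 hHu z
end

section
/- Let n ≥ 1 and m ≥ 1, let λ_1, …, λ_n be pairwise distinct nonzero complex numbers with nonzero coefficients α_1, …, α_n, and let κ_1, …, κ_m be pairwise distinct nonzero complex numbers with nonzero coefficients β_1, …, β_m. If Σ_{i=1}^n α_i λ_i^j = Σ_{i=1}^m β_i κ_i^j for all j = 0, 1, …, n+m−1, then n = m and there is a permutation σ of {1, …, n} with κ_{σ(i)} = λ_i and β_{σ(i)} = α_i for all i; that is, an n-term exponential model with distinct nonzero nodes and nonzero coefficients is uniquely determined by its first n+m samples. -/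
lemma vandermonde_vanish {N : ℕ} (v w : Fin N → ℂ) (hv : Function.Injective v)
    (h : ∀ j : ℕ, j < N → ∑ k, w k * v k ^ j = 0) : ∀ k, w k = 0 := by
  classical
  set M := Matrix.vandermonde v with hM
  have hdet : M.det ≠ 0 := (Matrix.det_vandermonde_ne_zero_iff).2 hv
  have hvm : Matrix.vecMul w M = 0 := by
    funext j
    simpa [Matrix.vecMul, dotProduct, hM, Matrix.vandermonde] using h j j.isLt
  have hw : w = 0 := by
    have : Matrix.vecMul (Matrix.vecMul w M) M⁻¹ = Matrix.vecMul (0 : Fin N → ℂ) M⁻¹ := by rw [hvm]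
    rwa [Matrix.vecMul_vecMul, Matrix.mul_nonsing_inv M (isUnit_iff_ne_zero.2 hdet),
      Matrix.vecMul_one, Matrix.zero_vecMul] at this
  intro k; rw [hw]; rfl

/-- An exponential model with pairwise distinct nonzero nodes and nonzero
coefficients is uniquely determined by its first `n + m` samples: if two such models of
orders `n` and `m` agree on the samples `j = 0, …, n+m−1`, then `n = m` and the nodes
and coefficients coincide up to a permutation. -/
theorem exponential_model_uniqueness
    (n m : ℕ) (hn : 1 ≤ n) (hm : 1 ≤ m)
    (lam α : Fin n → ℂ) (kap β : Fin m → ℂ)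
    (hlam : Function.Injective lam) (hlam0 : ∀ i, lam i ≠ 0) (hα : ∀ i, α i ≠ 0)
    (hkap : Function.Injective kap) (hkap0 : ∀ i, kap i ≠ 0) (hβ : ∀ i, β i ≠ 0)
    (h : ∀ j : ℕ, j < n + m → ∑ i, α i * lam i ^ j = ∑ i, β i * kap i ^ j) :
    n = m ∧ ∃ σ : Fin n ≃ Fin m, ∀ i, kap (σ i) = lam i ∧ β (σ i) = α i := by
  classical
  set S : Finset ℂ := Finset.univ.image lam ∪ Finset.univ.image kap with hS
  have hNle : S.card ≤ n + m := by
    calc S.card ≤ (Finset.univ.image lam).card + (Finset.univ.image kap).card :=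
          Finset.card_union_le _ _
    _ ≤ n + m := by
        have h1 : (Finset.univ.image lam).card ≤ n := by
          simpa using Finset.card_image_le (s := (Finset.univ : Finset (Fin n))) (f := lam)
        have h2 : (Finset.univ.image kap).card ≤ m := by
          simpa using Finset.card_image_le (s := (Finset.univ : Finset (Fin m))) (f := kap)
        omega
  set c : ℂ → ℂ := fun μ =>
    (∑ i, if lam i = μ then α i else 0) - (∑ i, if kap i = μ then β i else 0) with hc
  have hsum : ∀ j : ℕ, ∑ μ ∈ S, c μ * μ ^ j =
      (∑ i, α i * lam i ^ j) - (∑ i, β i * kap i ^ j) := by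
    intro j
    have key : ∀ (k : ℕ) (f g : Fin k → ℂ), Function.Injective f →
        (∀ i, f i ∈ S) →
        ∑ μ ∈ S, (∑ i, if f i = μ then g i else 0) * μ ^ j = ∑ i, g i * f i ^ j := by
      intro k f g hf hmem
      simp only [Finset.sum_mul, ite_mul, zero_mul]
      rw [Finset.sum_comm]
      apply Finset.sum_congr rfl
      intro i _
      rw [Finset.sum_ite_eq S (f i) (fun μ => g i * μ ^ j)]
      simp [hmem i]
    simp only [hc, sub_mul, Finset.sum_sub_distrib]
    rw [key n lam α hlam (fun i => by simp [hS]), key m kap β hkap (fun i => by simp [hS])]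
  have hzero : ∀ μ ∈ S, c μ = 0 := by
    intro μ hμ
    have e := S.equivFin
    have := vandermonde_vanish (fun k => (e.symm k : ℂ)) (fun k => c (e.symm k : ℂ))
      (fun a b hab => by
        apply e.symm.injective; exact Subtype.ext hab)
      (fun j hj => by
        have h1 : ∑ k : Fin S.card, c ((e.symm k : ℂ)) * ((e.symm k : ℂ)) ^ j = 0 := by
          rw [Equiv.sum_comp e.symm (fun x : S => c (x:ℂ) * (x:ℂ) ^ j),
            Finset.sum_coe_sort S (fun x => c x * x ^ j), hsum j,
            h j (lt_of_lt_of_le hj hNle)]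
          ring
        simpa using h1)
      (e ⟨μ, hμ⟩)
    simpa using this
  have hfn : ∀ i : Fin n, ∃ i' : Fin m, kap i' = lam i ∧ β i' = α i := by
    intro i
    have h0 := hzero (lam i) (by simp [hS])
    have hA : (∑ i', if lam i' = lam i then α i' else 0) = α i := by
      rw [Finset.sum_eq_single i]
      · simp
      · intro b _ hb; rw [if_neg (fun hh => hb (hlam hh))]
      · simp
    have hB : (∑ i', if kap i' = lam i then β i' else 0) = α i := by
      have h0' := h0
      simp only [hc] at h0'
      rw [hA] at h0'; linear_combination -h0'
    by_cases hex : ∃ i0, kap i0 = lam i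
    · obtain ⟨i0, hi0⟩ := hex
      refine ⟨i0, hi0, ?_⟩
      have hsb : (∑ i', if kap i' = lam i then β i' else 0) = β i0 := by
        rw [Finset.sum_eq_single i0]
        · rw [if_pos hi0]
        · intro b _ hb
          rw [if_neg (fun hh => hb (hkap (hh.trans hi0.symm)))]
        · simp
      rw [hsb] at hB; exact hB
    · exfalso
      push_neg at hex
      have : (∑ i' : Fin m, if kap i' = lam i then β i' else 0) = 0 :=
        Finset.sum_eq_zero fun i' _ => if_neg (hex i')
      rw [this] at hB; exact hα i hB.symm
  have hgn : ∀ i' : Fin m, ∃ i : Fin n, lam i = kap i' := by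
    intro i'
    have h0 := hzero (kap i') (by simp [hS])
    have hB : (∑ i'', if kap i'' = kap i' then β i'' else 0) = β i' := by
      rw [Finset.sum_eq_single i']
      · simp
      · intro b _ hb; rw [if_neg (fun hh => hb (hkap hh))]
      · simp
    have hA : (∑ i, if lam i = kap i' then α i else 0) = β i' := by
      have h0' := h0
      simp only [hc] at h0'
      rw [hB] at h0'; linear_combination h0'
    by_contra hex
    push_neg at hex
    have : (∑ i : Fin n, if lam i = kap i' then α i else 0) = 0 :=
      Finset.sum_eq_zero fun i _ => if_neg (hex i)
    rw [this] at hA; exact hβ i' hA.symm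
  choose f hf1 hf2 using hfn
  choose g hg using hgn
  have hfinj : Function.Injective f := fun a b hab => hlam (by rw [← hf1 a, ← hf1 b, hab])
  have hginj : Function.Injective g := fun a b hab => hkap (by rw [← hg a, ← hg b, hab])
  have hnm : n = m := le_antisymm
    (by simpa using Fintype.card_le_of_injective f hfinj)
    (by simpa using Fintype.card_le_of_injective g hginj)
  have hbij : Function.Bijective f :=
    (Fintype.bijective_iff_injective_and_card f).2 ⟨hfinj, by simp [hnm]⟩
  exact ⟨hnm, Equiv.ofBijective f hbij, fun i => ⟨hf1 i, hf2 i⟩⟩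
end
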